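/- Let α, λ be distinct positive restricted roots such that λ − α is not a root. Then for any X_α ∈ g_α and X_λ, Y_λ ∈ g_λ, one has ⟨[X_α, X_λ], [X_α, Y_λ]⟩ = −|α|² A_{α,λ} ⟨X_α, X_α⟩ ⟨X_λ, Y_λ⟩, where ⟨·,·⟩ is the left-invariant inner product on a ⊕ n. In particular, if A_{α,λ} < 0 and X_α, X_λ are nonzero, then [X_α, X_λ] ≠ 0. -/

import Mathlib

/-!
Write `B` for the Killing form. Since `θ` maps `g_λ` to `g_{-λ}`, the bracket `[X_α, θ X_λ]` lies in
`g_{α-λ} = 0`, while `[X_α, θ X_α]` is `θ`-anti-invariant and centralises `a`, hence lies in `a`; pairing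
it with `a` identifies it as `B(X_α, θ X_α) H_α`. Invariance of `B` and the Jacobi identity then give
`B([X_α, X_λ], θ[X_α, Y_λ]) = B(X_α, θ X_α) B(H_α, H_λ) B(X_λ, θ Y_λ)`, which is the identity. For
`Y_λ = X_λ` the right-hand side is a product of nonzero factors when `A_{α,λ} < 0`.
-/

/-- Restricted root space of the functional `l` relative to `a`. -/
def rootSpaceIn {g : Type*} [LieRing g] [LieAlgebra ℝ g] (a : Submodule ℝ g)
    (l : g →ₗ[ℝ] ℝ) : Submodule ℝ g where
  carrier := {X | ∀ H ∈ a, ⁅H, X⁆ = l H • X}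
  add_mem' := by
    intro x y hx hy H hH
    simp only [Set.mem_setOf_eq] at hx hy
    rw [lie_add, hx H hH, hy H hH, smul_add]
  zero_mem' := by intro H hH; simp
  smul_mem' := by
    intro c x hx H hH
    simp only [Set.mem_setOf_eq] at hx
    rw [lie_smul, hx H hH, smul_comm]

/-- The metric inner product on `n`: one half of the inner product
`⟨x, y⟩_{B_θ} = -B(x, θ y)`. -/
noncomputable def mI {g : Type*} [LieRing g] [LieAlgebra ℝ g]
    (θ : g →ₗ⁅ℝ⁆ g) (x y : g) : ℝ :=
  (1 / 2) * (-(killingForm ℝ g x (θ y)))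

/-- The Cartan integer `A_{α,λ} = 2⟨α,λ⟩/|α|²`, expressed through the vectors
`H_α`, `H_λ` (on `a` the `B_θ` inner product coincides with the Killing form`). -/
noncomputable def cartanInt {g : Type*} [LieRing g] [LieAlgebra ℝ g]
    (Ha Hl : g) : ℝ :=
  2 * killingForm ℝ g Ha Hl / killingForm ℝ g Ha Ha

section RootSpaces

variable {g : Type*} [LieRing g] [LieAlgebra ℝ g] {a : Submodule ℝ g}

theorem lie_mem_rootSpaceIn_add {l m : g →ₗ[ℝ] ℝ} {X Y : g}
    (hX : X ∈ rootSpaceIn a l) (hY : Y ∈ rootSpaceIn a m) :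
    ⁅X, Y⁆ ∈ rootSpaceIn a (l + m) := by
  intro H hH
  rw [leibniz_lie, hX H hH, hY H hH, smul_lie, lie_smul, LinearMap.add_apply, add_smul]

theorem map_mem_rootSpaceIn_neg {θ : g →ₗ⁅ℝ⁆ g} (hθ2 : ∀ x, θ (θ x) = x)
    (haθ : ∀ H ∈ a, θ H = -H) {l : g →ₗ[ℝ] ℝ} {X : g} (hX : X ∈ rootSpaceIn a l) :
    θ X ∈ rootSpaceIn a (-l) := by
  intro H hH
  calc ⁅H, θ X⁆ = θ ⁅θ H, X⁆ := by rw [LieHom.map_lie, hθ2]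
    _ = (-l) H • θ X := by
      rw [haθ H hH, neg_lie, hX H hH, map_neg, map_smul, LinearMap.neg_apply, neg_smul]

theorem lie_map_self_mem {θ : g →ₗ⁅ℝ⁆ g} (hθ2 : ∀ x, θ (θ x) = x)
    (haθ : ∀ H ∈ a, θ H = -H)
    (hamax : ∀ x : g, θ x = -x → (∀ H ∈ a, ⁅H, x⁆ = (0 : g)) → x ∈ a)
    {l : g →ₗ[ℝ] ℝ} {X : g} (hX : X ∈ rootSpaceIn a l) :
    ⁅X, θ X⁆ ∈ a := by
  have hcent : ⁅X, θ X⁆ ∈ rootSpaceIn a 0 := by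
    simpa using lie_mem_rootSpaceIn_add hX (map_mem_rootSpaceIn_neg hθ2 haθ hX)
  refine hamax _ ?_ fun H hH => by simpa using hcent H hH
  rw [LieHom.map_lie, hθ2, ← lie_skew]

theorem rootSpaceIn_sub_eq_bot {Sp : Finset (g →ₗ[ℝ] ℝ)}
    (hroots : ∀ l : g →ₗ[ℝ] ℝ,
      ((∃ H ∈ a, l H ≠ 0) ∧ rootSpaceIn a l ≠ ⊥) → (l ∈ Sp ∨ -l ∈ Sp))
    {α lam : g →ₗ[ℝ] ℝ} (hne : ∃ H ∈ a, α H ≠ lam H) (hnr : lam - α ∉ Sp ∧ α - lam ∉ Sp) :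
    rootSpaceIn a (α - lam) = ⊥ := by
  by_contra hbot
  obtain ⟨H, hH, hαH⟩ := hne
  rcases hroots (α - lam) ⟨⟨H, hH, sub_ne_zero.mpr hαH⟩, hbot⟩ with h | h
  · exact hnr.2 h
  · exact hnr.1 (by rwa [neg_sub] at h)

end RootSpaces

section KillingForm

variable {g : Type*} [LieRing g] [LieAlgebra ℝ g] {θ : g →ₗ⁅ℝ⁆ g} {a : Submodule ℝ g}

theorem killingForm_self_pos_of_mem (hθpos : ∀ x : g, x ≠ 0 → 0 < -(killingForm ℝ g x (θ x)))
    (haθ : ∀ H ∈ a, θ H = -H) {H : g} (hH : H ∈ a) (h0 : H ≠ 0) :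
    0 < killingForm ℝ g H H := by
  simpa [haθ H hH] using hθpos H h0

theorem mI_self_pos (hθpos : ∀ x : g, x ≠ 0 → 0 < -(killingForm ℝ g x (θ x))) {X : g}
    (h0 : X ≠ 0) : 0 < mI θ X X := by
  unfold mI
  linarith [hθpos X h0]

theorem killingForm_mul_cartanInt (hθpos : ∀ x : g, x ≠ 0 → 0 < -(killingForm ℝ g x (θ x)))
    (haθ : ∀ H ∈ a, θ H = -H) {Ha : g} (hHa : Ha ∈ a) (Hl : g) :
    killingForm ℝ g Ha Ha * cartanInt Ha Hl = 2 * killingForm ℝ g Ha Hl := by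
  unfold cartanInt
  rcases eq_or_ne Ha 0 with rfl | h0
  · simp
  · field_simp [(killingForm_self_pos_of_mem hθpos haθ hHa h0).ne']

theorem lie_map_self_eq_smul (hθ2 : ∀ x, θ (θ x) = x)
    (hθpos : ∀ x : g, x ≠ 0 → 0 < -(killingForm ℝ g x (θ x)))
    (haθ : ∀ H ∈ a, θ H = -H)
    (hamax : ∀ x : g, θ x = -x → (∀ H ∈ a, ⁅H, x⁆ = (0 : g)) → x ∈ a)
    {l : g →ₗ[ℝ] ℝ} {Hα : g} (hHα : Hα ∈ a ∧ ∀ H ∈ a, killingForm ℝ g Hα H = l H)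
    {X : g} (hX : X ∈ rootSpaceIn a l) :
    ⁅X, θ X⁆ = killingForm ℝ g X (θ X) • Hα := by
  set W := ⁅X, θ X⁆ - killingForm ℝ g X (θ X) • Hα
  have hW : W ∈ a := a.sub_mem (lie_map_self_mem hθ2 haθ hamax hX) (a.smul_mem _ hHα.1)
  have horth : ∀ H ∈ a, killingForm ℝ g W H = 0 := by
    intro H hH
    have hθX : ⁅H, θ X⁆ = -(l H • θ X) := by
      rw [map_mem_rootSpaceIn_neg hθ2 haθ hX H hH, LinearMap.neg_apply, neg_smul]
    rw [map_sub, map_smul, LinearMap.sub_apply, LinearMap.smul_apply, hHα.2 H hH,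
      LieModule.traceForm_apply_lie_apply, ← lie_skew, hθX, neg_neg, map_smul, smul_eq_mul,
      smul_eq_mul, mul_comm, sub_self]
  by_contra hne
  exact (killingForm_self_pos_of_mem hθpos haθ hW (sub_ne_zero.mpr hne)).ne' (horth W hW)

theorem killingForm_lie_map_lie {X Y Y' H : g} {c μ : ℝ} (hXX : ⁅X, θ X⁆ = c • H)
    (hXY' : ⁅X, θ Y'⁆ = 0) (hHY' : ⁅H, θ Y'⁆ = μ • θ Y') :
    killingForm ℝ g ⁅X, Y⁆ (θ ⁅X, Y'⁆) = -(c * μ) * killingForm ℝ g Y (θ Y') := by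
  have hjacobi : ⁅X, ⁅θ X, θ Y'⁆⁆ = (c * μ) • θ Y' := by
    rw [leibniz_lie, hXY', lie_zero, add_zero, hXX, smul_lie, hHY', smul_smul]
  rw [LieHom.map_lie, ← lie_skew, map_neg, LinearMap.neg_apply,
    LieModule.traceForm_apply_lie_apply, hjacobi, map_smul, smul_eq_mul, neg_mul]

theorem mI_lie_lie (hθ2 : ∀ x, θ (θ x) = x)
    (hθpos : ∀ x : g, x ≠ 0 → 0 < -(killingForm ℝ g x (θ x)))
    (haθ : ∀ H ∈ a, θ H = -H)
    (hamax : ∀ x : g, θ x = -x → (∀ H ∈ a, ⁅H, x⁆ = (0 : g)) → x ∈ a)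
    {α lam : g →ₗ[ℝ] ℝ} (hbot : rootSpaceIn a (α - lam) = ⊥)
    {Ha : g} (hHa : Ha ∈ a ∧ ∀ H ∈ a, killingForm ℝ g Ha H = α H)
    {Hl : g} (hHl : ∀ H ∈ a, killingForm ℝ g Hl H = lam H)
    {Xa Xl Yl : g} (hXa : Xa ∈ rootSpaceIn a α) (hYl : Yl ∈ rootSpaceIn a lam) :
    mI θ ⁅Xa, Xl⁆ ⁅Xa, Yl⁆
      = -(killingForm ℝ g Ha Ha * cartanInt Ha Hl * mI θ Xa Xa * mI θ Xl Yl) := by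
  have hθYl := map_mem_rootSpaceIn_neg hθ2 haθ hYl
  have hcross : ⁅Xa, θ Yl⁆ = 0 := by
    have h := lie_mem_rootSpaceIn_add hXa hθYl
    rwa [← sub_eq_add_neg, hbot, Submodule.mem_bot] at h
  have hHaYl : ⁅Ha, θ Yl⁆ = -killingForm ℝ g Ha Hl • θ Yl := by
    rw [hθYl Ha hHa.1, LinearMap.neg_apply, ← hHl Ha hHa.1, LieModule.traceForm_comm]
  have hkey := killingForm_lie_map_lie (Y := Xl)
    (lie_map_self_eq_smul hθ2 hθpos haθ hamax hHa hXa) hcross hHaYl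
  unfold mI
  rw [hkey]
  linear_combination (killingForm ℝ g Xa (θ Xa) * killingForm ℝ g Xl (θ Yl) / 4) *
    killingForm_mul_cartanInt hθpos haθ hHa.1 Hl

end KillingForm

theorem stmt2_general {g : Type*} [LieRing g] [LieAlgebra ℝ g]
    (θ : g →ₗ⁅ℝ⁆ g) (hθ2 : ∀ x, θ (θ x) = x)
    (hθpos : ∀ x : g, x ≠ 0 → 0 < -(killingForm ℝ g x (θ x)))
    (a : Submodule ℝ g)
    (haθ : ∀ H ∈ a, θ H = -H)
    (hamax : ∀ x : g, θ x = -x → (∀ H ∈ a, ⁅H, x⁆ = (0 : g)) → x ∈ a)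
    -- the set of positive restricted roots
    (Sp : Finset (g →ₗ[ℝ] ℝ))
    (hroots : ∀ l : g →ₗ[ℝ] ℝ,
      ((∃ H ∈ a, l H ≠ 0) ∧ rootSpaceIn a l ≠ ⊥) ↔ (l ∈ Sp ∨ -l ∈ Sp))
    (α lam : g →ₗ[ℝ] ℝ)
    -- `α` and `λ` are distinct (as restricted roots, i.e. on `a`)
    (hne : ∃ H ∈ a, α H ≠ lam H)
    -- `λ - α` is not a root
    (hnr : lam - α ∉ Sp ∧ α - lam ∉ Sp)
    -- the vectors `H_α`, `H_λ` representing the roots via the Killing form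
    (Ha : g) (hHa : Ha ∈ a ∧ ∀ H ∈ a, killingForm ℝ g Ha H = α H)
    (Hl : g) (hHl : Hl ∈ a ∧ ∀ H ∈ a, killingForm ℝ g Hl H = lam H)
    (Xa : g) (hXa : Xa ∈ rootSpaceIn a α)
    (Xl : g) (hXl : Xl ∈ rootSpaceIn a lam)
    (Yl : g) (hYl : Yl ∈ rootSpaceIn a lam) :
    mI θ ⁅Xa, Xl⁆ ⁅Xa, Yl⁆
        = -(killingForm ℝ g Ha Ha * cartanInt Ha Hl * mI θ Xa Xa * mI θ Xl Yl)
      ∧ (cartanInt Ha Hl < 0 → Xa ≠ 0 → Xl ≠ 0 → ⁅Xa, Xl⁆ ≠ 0) := by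
  have hident : ∀ Y ∈ rootSpaceIn a lam, mI θ ⁅Xa, Xl⁆ ⁅Xa, Y⁆
      = -(killingForm ℝ g Ha Ha * cartanInt Ha Hl * mI θ Xa Xa * mI θ Xl Y) :=
    fun Y hY => mI_lie_lie hθ2 hθpos haθ hamax
      (rootSpaceIn_sub_eq_bot (fun l => (hroots l).mp) hne hnr) hHa hHl.2 hXa hY
  refine ⟨hident Yl hYl, fun hA hXa0 hXl0 hbr => ?_⟩
  -- `cartanInt Ha Hl` divides by `B(H_α, H_α)`, so it would be `0` if that vanished
  have hBaa : killingForm ℝ g Ha Ha ≠ 0 := fun h => hA.ne (by simp [cartanInt, h])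
  have hprod := mul_ne_zero (mul_ne_zero (mul_ne_zero hBaa hA.ne)
    (mI_self_pos hθpos hXa0).ne') (mI_self_pos hθpos hXl0).ne'
  refine neg_ne_zero.mpr hprod ?_
  simpa [hbr, mI] using (hident Xl hXl).symm

/-- Let `α, λ` be distinct positive restricted roots with
`λ - α` not a root.  Then for `X_α ∈ g_α` and `X_λ, Y_λ ∈ g_λ`,
`⟨[X_α, X_λ], [X_α, Y_λ]⟩ = -|α|² A_{α,λ} ⟨X_α, X_α⟩ ⟨X_λ, Y_λ⟩` for the metric
inner product `⟨·,·⟩` on `a ⊕ n`; in particular if `A_{α,λ} < 0` and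
`X_α, X_λ ≠ 0` then `[X_α, X_λ] ≠ 0`. -/
theorem stmt2 {g : Type*} [LieRing g] [LieAlgebra ℝ g] [FiniteDimensional ℝ g]
    [LieAlgebra.IsSemisimple ℝ g]
    (θ : g →ₗ⁅ℝ⁆ g) (hθ2 : ∀ x, θ (θ x) = x)
    (hθpos : ∀ x : g, x ≠ 0 → 0 < -(killingForm ℝ g x (θ x)))
    (a : Submodule ℝ g)
    (haθ : ∀ H ∈ a, θ H = -H)
    (haab : ∀ H ∈ a, ∀ H' ∈ a, ⁅H, H'⁆ = (0 : g))
    (hamax : ∀ x : g, θ x = -x → (∀ H ∈ a, ⁅H, x⁆ = (0 : g)) → x ∈ a)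
    -- the set of positive restricted roots
    (Sp : Finset (g →ₗ[ℝ] ℝ))
    (hroots : ∀ l : g →ₗ[ℝ] ℝ,
      ((∃ H ∈ a, l H ≠ 0) ∧ rootSpaceIn a l ≠ ⊥) ↔ (l ∈ Sp ∨ -l ∈ Sp))
    (α lam : g →ₗ[ℝ] ℝ) (hαSp : α ∈ Sp) (hlamSp : lam ∈ Sp)
    -- `α` and `λ` are distinct (as restricted roots, i.e. on `a`)
    (hne : ∃ H ∈ a, α H ≠ lam H)
    -- `λ - α` is not a root
    (hnr : lam - α ∉ Sp ∧ α - lam ∉ Sp)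
    -- the vectors `H_α`, `H_λ` representing the roots via the Killing form
    (Ha : g) (hHa : Ha ∈ a ∧ ∀ H ∈ a, killingForm ℝ g Ha H = α H)
    (Hl : g) (hHl : Hl ∈ a ∧ ∀ H ∈ a, killingForm ℝ g Hl H = lam H)
    (Xa : g) (hXa : Xa ∈ rootSpaceIn a α)
    (Xl : g) (hXl : Xl ∈ rootSpaceIn a lam)
    (Yl : g) (hYl : Yl ∈ rootSpaceIn a lam) :
    mI θ ⁅Xa, Xl⁆ ⁅Xa, Yl⁆
        = -(killingForm ℝ g Ha Ha * cartanInt Ha Hl * mI θ Xa Xa * mI θ Xl Yl)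
      ∧ (cartanInt Ha Hl < 0 → Xa ≠ 0 → Xl ≠ 0 → ⁅Xa, Xl⁆ ≠ 0) :=
  stmt2_general θ hθ2 hθpos a haθ hamax Sp hroots α lam hne hnr Ha hHa Hl hHl Xa hXa Xl hXl Yl hYl
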